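/- Let G be a finite abelian group of m×m unitary monomial matrices, λ : G → ℂ∖{0} a group homomorphism, and Ψ = ∑_{ν∈T(m,n)} c_ν e_ν a vector in the joint eigenspace V_λ^G = {w : B_n(g) w = λ(g) w for all g ∈ G}. Then for every g ∈ G and every ν ∈ T(m,n), |c_{ν∘π_g}| = |c_ν|; i.e., the modulus of the coefficient of Ψ is constant on each orbit {ν∘π_g : g ∈ G}. -/

import Mathlib

/-!
For a unitary monomial matrix `S` (`S eᵢ = dᵢ e_{π i}`), the permanent of `S^{(ν,ν')}` counts the
permutations `σ` with `repFun ν ∘ σ = π ∘ repFun ν'`. These exist exactly when `ν' = ν ∘ π`, and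
then there are `∏ ν(i)!` of them, which cancels the normalisation. So row `ν` of `B_n(S)` has a
single nonzero entry, of modulus one, in column `ν ∘ π`, and row `ν` of `B_n(g) Ψ = λ(g) Ψ` gives
`|Ψ(ν ∘ π_g)| = |λ(g)| |Ψ(ν)|`; finally `|λ(g)| = 1` because `g` has finite order.
-/

namespace BSF

variable {α : Type*} [Fintype α] [DecidableEq α]

/-- The canonical list in which each index `i` is repeated `ν i` times. -/
noncomputable def repList (ν : α → ℕ) : List α :=
  Finset.univ.toList.flatMap fun i => List.replicate (ν i) i

set_option linter.unusedSectionVars false in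
lemma repList_length (ν : α → ℕ) : (repList ν).length = ∑ i, ν i := by
  simp [repList, List.length_flatMap]

/-- The index set `T(m,n)`: occupation-number tuples with total `n`. -/
def BosonIdx (α : Type*) [Fintype α] (n : ℕ) := {ν : α → ℕ // ∑ i, ν i = n}

instance {n : ℕ} : DecidableEq (BosonIdx α n) :=
  inferInstanceAs (DecidableEq {ν : α → ℕ // ∑ i, ν i = n})

noncomputable instance {n : ℕ} : Fintype (BosonIdx α n) :=
  Fintype.ofInjective
    (fun ν : BosonIdx α n => fun i : α =>
      (⟨ν.1 i, by
        have h := Finset.single_le_sum (f := ν.1) (fun j _ => Nat.zero_le _) (Finset.mem_univ i)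
        rw [ν.2] at h
        omega⟩ : Fin (n + 1)))
    (fun a b hab => Subtype.ext (funext fun i => congrArg Fin.val (congrFun hab i)))

/-- The permanent of a square complex matrix. -/
noncomputable def permanent {n : ℕ} (M : Matrix (Fin n) (Fin n) ℂ) : ℂ :=
  ∑ σ : Equiv.Perm (Fin n), ∏ i, M (σ i) i

/-- The canonical repetition function associated with an occupation tuple. -/
noncomputable def repFun {n : ℕ} (ν : BosonIdx α n) : Fin n → α :=
  fun k => (repList ν.1).get (Fin.cast ((repList_length ν.1).trans ν.2).symm k)

/-- The `n`-boson representation of a matrix `S`. -/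
noncomputable def bosonRep (n : ℕ) (S : Matrix α α ℂ) :
    Matrix (BosonIdx α n) (BosonIdx α n) ℂ :=
  Matrix.of fun ν ν' =>
    permanent (Matrix.of fun k l => S (repFun ν k) (repFun ν' l)) /
      (Real.sqrt ((∏ i, (ν.1 i).factorial * (ν'.1 i).factorial : ℕ) : ℝ) : ℂ)

/-- Relabeling an occupation tuple by (precomposition with) a permutation of the modes. -/
def permIdx {n : ℕ} (σ : Equiv.Perm α) (ν : BosonIdx α n) : BosonIdx α n :=
  ⟨ν.1 ∘ σ, show ∑ i, ν.1 (σ i) = n from (Equiv.sum_comp σ ν.1).trans ν.2⟩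

lemma count_repList (ν : α → ℕ) (i : α) : (repList ν).count i = ν i := by
  simp [repList, List.count_flatMap, List.count_replicate, Function.comp]

lemma card_fiber_repFun {n : ℕ} (ν : BosonIdx α n) (i : α) :
    Fintype.card {k // repFun ν k = i} = ν.1 i := by
  rw [Fintype.card_subtype, ← count_repList ν.1 i]
  exact Fin.card_filter_univ_eq_vector_get_eq_count i
    ⟨repList ν.1, (repList_length ν.1).trans ν.2⟩

lemma card_fiber_perm_comp_repFun {n : ℕ} (π : Equiv.Perm α) (ν : BosonIdx α n) (i : α) :
    Fintype.card {k // (π ∘ repFun ν) k = i} = ν.1 (π.symm i) := by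
  rw [← card_fiber_repFun]
  exact Fintype.card_congr (Equiv.subtypeEquivRight fun _ => π.eq_symm_apply.symm)

section Fibers

variable {ι : Type*} [Fintype ι] [DecidableEq ι] {f t : ι → α}

omit [Fintype α] [DecidableEq ι] in
lemma card_fiber_eq_of_comp_perm {σ : Equiv.Perm ι} (h : f ∘ σ = t) (i : α) :
    Fintype.card {k // t k = i} = Fintype.card {k // f k = i} :=
  Fintype.card_congr (σ.subtypeEquiv fun k => by rw [← h, Function.comp_apply])

omit [Fintype α] [DecidableEq ι] in
lemma exists_perm_comp_eq_of_card_fiber_eq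
    (h : ∀ i, Fintype.card {k // t k = i} = Fintype.card {k // f k = i}) :
    ∃ σ : Equiv.Perm ι, f ∘ σ = t := by
  refine ⟨(Equiv.sigmaFiberEquiv t).symm.trans
    ((Equiv.sigmaCongrRight fun i => Fintype.equivOfCardEq (h i)).trans
      (Equiv.sigmaFiberEquiv f)), funext fun k => ?_⟩
  simp only [Function.comp_apply, Equiv.trans_apply]
  exact ((Equiv.sigmaCongrRight fun i => Fintype.equivOfCardEq (h i))
    ((Equiv.sigmaFiberEquiv t).symm k)).2.2

lemma card_perm_comp_eq {τ : Equiv.Perm ι} (hτ : f ∘ τ = t) :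
    Fintype.card {σ : Equiv.Perm ι // f ∘ σ = t} =
      ∏ i, (Fintype.card {k // t k = i}).factorial := by
  have hc : Fintype.card {σ : Equiv.Perm ι // f ∘ σ = t}
      = Fintype.card {σ : Equiv.Perm ι // t ∘ σ = t} :=
    Fintype.card_congr (Equiv.subtypeEquiv (Equiv.mulLeft τ⁻¹) fun σ => by
      rw [← hτ]; simp [Function.comp_def])
  rw [hc, DomMulAct.stabilizer_card t]

end Fibers

omit [Fintype α] in
lemma permanent_of_ite_eq {n : ℕ} (f t : Fin n → α) (w : Fin n → ℂ) :
    permanent (Matrix.of fun k l => if f k = t l then w l else 0) =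
      Fintype.card {σ : Equiv.Perm (Fin n) // f ∘ σ = t} * ∏ l, w l := by
  simp only [permanent, Matrix.of_apply, Fintype.prod_ite_zero, Fintype.card_subtype, funext_iff,
    Function.comp_apply, Finset.card_filter, Nat.cast_sum, Finset.sum_mul]
  refine Finset.sum_congr rfl fun σ _ => ?_
  split_ifs <;> simp

/-- `S eᵢ = dᵢ e_{π i}`. -/
def IsMonomial (S : Matrix α α ℂ) (π : Equiv.Perm α) (d : α → ℂ) : Prop :=
  ∀ i j, S j i = if j = π i then d i else 0

section Monomial

variable {n : ℕ} {S : Matrix α α ℂ} {π : Equiv.Perm α} {d : α → ℂ}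

lemma IsMonomial.bosonRep_apply (hS : IsMonomial S π d) (ν ν' : BosonIdx α n) :
    bosonRep n S ν ν' =
      Fintype.card {σ : Equiv.Perm (Fin n) // repFun ν ∘ σ = π ∘ repFun ν'} *
          (∏ l, d (repFun ν' l)) /
        (Real.sqrt ((∏ i, (ν.1 i).factorial * (ν'.1 i).factorial : ℕ) : ℝ) : ℂ) := by
  have hper := permanent_of_ite_eq (repFun ν) (π ∘ repFun ν') fun l => d (repFun ν' l)
  simp only [Function.comp_apply] at hper
  unfold IsMonomial at hS
  simp only [bosonRep, Matrix.of_apply, hS, hper]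

lemma exists_perm_comp_repFun_iff (ν ν' : BosonIdx α n) :
    (∃ σ : Equiv.Perm (Fin n), repFun ν ∘ σ = π ∘ repFun ν') ↔ ν' = permIdx π ν := by
  constructor
  · rintro ⟨σ, hσ⟩
    refine Subtype.ext (funext fun i => ?_)
    have := card_fiber_eq_of_comp_perm hσ (π i)
    rwa [card_fiber_perm_comp_repFun, card_fiber_repFun, Equiv.symm_apply_apply] at this
  · rintro rfl
    refine exists_perm_comp_eq_of_card_fiber_eq fun i => ?_
    rw [card_fiber_perm_comp_repFun, card_fiber_repFun]
    exact congrArg ν.1 (π.apply_symm_apply i)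

lemma IsMonomial.bosonRep_apply_eq_zero (hS : IsMonomial S π d) {ν ν' : BosonIdx α n}
    (h : ν' ≠ permIdx π ν) : bosonRep n S ν ν' = 0 := by
  have hempty : IsEmpty {σ : Equiv.Perm (Fin n) // repFun ν ∘ σ = π ∘ repFun ν'} :=
    ⟨fun σ => h ((exists_perm_comp_repFun_iff ν ν').1 ⟨σ, σ.2⟩)⟩
  rw [hS.bosonRep_apply, Fintype.card_eq_zero, Nat.cast_zero, zero_mul, zero_div]

lemma IsMonomial.norm_bosonRep_apply_permIdx (hS : IsMonomial S π d)
    (hd : ∀ i, ‖d i‖ = 1) (ν : BosonIdx α n) : ‖bosonRep n S ν (permIdx π ν)‖ = 1 := by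
  set N := ∏ i, (ν.1 i).factorial
  obtain ⟨τ, hτ⟩ := (exists_perm_comp_repFun_iff (π := π) ν (permIdx π ν)).2 rfl
  have hcard :
      Fintype.card {σ : Equiv.Perm (Fin n) // repFun ν ∘ σ = π ∘ repFun (permIdx π ν)} = N := by
    simp only [card_perm_comp_eq hτ, card_fiber_perm_comp_repFun]
    exact Finset.prod_congr rfl fun i _ =>
      congrArg (fun k => (ν.1 k).factorial) (π.apply_symm_apply i)
  have hsqrt : Real.sqrt ((∏ i, (ν.1 i).factorial * ((permIdx π ν).1 i).factorial : ℕ) : ℝ)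
      = N := by
    rw [Finset.prod_mul_distrib, show ∏ i, ((permIdx π ν).1 i).factorial = N from
      Equiv.prod_comp π fun i => (ν.1 i).factorial, Nat.cast_mul,
      Real.sqrt_mul_self (by positivity)]
  have hN : (N : ℂ) ≠ 0 :=
    Nat.cast_ne_zero.2 (Finset.prod_ne_zero_iff.2 fun i _ => Nat.factorial_ne_zero _)
  rw [hS.bosonRep_apply, hcard, hsqrt, Complex.ofReal_natCast, mul_div_cancel_left₀ _ hN,
    norm_prod]
  exact Finset.prod_eq_one fun l _ => hd _

lemma IsMonomial.bosonRep_mulVec_apply (hS : IsMonomial S π d)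
    (v : BosonIdx α n → ℂ) (ν : BosonIdx α n) :
    (bosonRep n S).mulVec v ν = bosonRep n S ν (permIdx π ν) * v (permIdx π ν) :=
  Fintype.sum_eq_single _ fun _ h => by
    simp only [hS.bosonRep_apply_eq_zero h, zero_mul]

end Monomial

theorem orbit_constant_modulus_general {m n : ℕ}
    {G : Type*} [CommGroup G] [Fintype G]
    (ρ : G →* Matrix (Fin m) (Fin m) ℂ)
    (π : G → Equiv.Perm (Fin m)) (d : G → Fin m → ℂ)
    (hd : ∀ g i, ‖d g i‖ = 1)
    (hρ : ∀ g i j, ρ g j i = if j = π g i then d g i else 0)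
    (lam : G →* ℂˣ)
    (Ψ : BosonIdx (Fin m) n → ℂ)
    (hΨ : ∀ g : G, (bosonRep n (ρ g)).mulVec Ψ = (lam g : ℂ) • Ψ) :
    ∀ (g : G) (ν : BosonIdx (Fin m) n),
      ‖Ψ (permIdx (π g) ν)‖ = ‖Ψ ν‖ := by
  intro g ν
  have hlam : ‖(lam g : ℂ)‖ = 1 :=
    ((Units.coeHom ℂ).comp lam |>.isOfFinOrder (isOfFinOrder_of_finite g)).norm_eq_one
  have hrow := congrFun (hΨ g) ν
  have hmon : IsMonomial (ρ g) (π g) (d g) := hρ g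
  rw [hmon.bosonRep_mulVec_apply, Pi.smul_apply, smul_eq_mul] at hrow
  simpa [hmon.norm_bosonRep_apply_permIdx (hd g), hlam] using congrArg norm hrow

/-- (Eq. (6) of the paper.) For a vector `Ψ` in a joint eigenspace of the
boson representation of a finite abelian group of unitary monomial matrices, the modulus of
its coefficients is constant on every orbit `{ν ∘ π_g : g ∈ G}`. -/
theorem orbit_constant_modulus {m n : ℕ} (hn : 0 < n)
    {G : Type*} [CommGroup G] [Fintype G]
    (ρ : G →* Matrix (Fin m) (Fin m) ℂ)
    (π : G → Equiv.Perm (Fin m)) (d : G → Fin m → ℂ)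
    (hd : ∀ g i, ‖d g i‖ = 1)
    (hρ : ∀ g i j, ρ g j i = if j = π g i then d g i else 0)
    (lam : G →* ℂˣ)
    (Ψ : BosonIdx (Fin m) n → ℂ)
    (hΨ : ∀ g : G, (bosonRep n (ρ g)).mulVec Ψ = (lam g : ℂ) • Ψ) :
    ∀ (g : G) (ν : BosonIdx (Fin m) n),
      ‖Ψ (permIdx (π g) ν)‖ = ‖Ψ ν‖ :=
  orbit_constant_modulus_general ρ π d hd hρ lam Ψ hΨ

end BSF
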